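/- arXiv:1706.09052 — 2 statements merged into one kernel-verified Lean document; each statement's English description precedes it below -/
import Mathlib

section
/- Let G be a finite simple graph that is (P1 ⊕ P3)-free. Then the vertex set of G can be partitioned into two disjoint sets A and B such that the subgraph induced by A is 3P1-free, the subgraph induced by B is P4-free, and every vertex of A is adjacent to every vertex of B. -/
open SimpleGraph

universe u
variable {V : Type*} {W : Type*}

/-- `H` is isomorphic to an induced subgraph of `G`. -/
def SimpleGraph.IsIndSubgraph {W V : Type*} (H : SimpleGraph W) (G : SimpleGraph V) : Prop :=
  ∃ f : W ↪ V, ∀ a b, G.Adj (f a) (f b) ↔ H.Adj a b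

/-- A set of pairwise non-adjacent vertices. -/
def SimpleGraph.IsIndepSet' (G : SimpleGraph V) (s : Set V) : Prop :=
  s.Pairwise fun a b => ¬ G.Adj a b

/-- The independence number of `G`. -/
noncomputable def SimpleGraph.indepNum' (G : SimpleGraph V) : ℕ :=
  sSup {n | ∃ s : Set V, G.IsIndepSet' s ∧ s.ncard = n}

/-- A matching, viewed as a set of pairwise disjoint edges of `G`. -/
def SimpleGraph.IsMatchingSet (G : SimpleGraph V) (M : Set (Sym2 V)) : Prop :=
  M ⊆ G.edgeSet ∧ M.Pairwise fun e f => ∀ x, x ∈ e → x ∉ f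

/-- The matching number of `G`. -/
noncomputable def SimpleGraph.matchingNum (G : SimpleGraph V) : ℕ :=
  sSup {n | ∃ M : Set (Sym2 V), G.IsMatchingSet M ∧ M.ncard = n}

/-- A vertex cover. -/
def SimpleGraph.IsVertexCover' (G : SimpleGraph V) (C : Set V) : Prop :=
  ∀ u v, G.Adj u v → u ∈ C ∨ v ∈ C

/-- Contraction of the edge `uv`, identifying the new vertex with `v`. -/
def SimpleGraph.contractEdge (G : SimpleGraph V) (u v : V) : SimpleGraph {x : V // x ≠ u} where
  Adj x y := x ≠ y ∧ (G.Adj x y ∨ (x.1 = v ∧ G.Adj u y) ∨ (y.1 = v ∧ G.Adj u x))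
  symm := by
    constructor
    rintro x y ⟨hne, h⟩
    refine ⟨hne.symm, ?_⟩
    rcases h with h | h | h
    · exact Or.inl h.symm
    · exact Or.inr (Or.inr h)
    · exact Or.inr (Or.inl h)
  loopless := ⟨fun x h => h.1 rfl⟩

/-- A maximal clique. -/
def SimpleGraph.IsMaxlClique (G : SimpleGraph V) (K : Set V) : Prop :=
  G.IsClique K ∧ ∀ K' : Set V, G.IsClique K' → K ⊆ K' → K' = K

/-!
Take for `B` the vertices lying in an independent triple and for `A` the rest, so that `A` is
`3P1`-free by construction. In a `(P1 ⊕ P3)`-free graph adjacency is transitive among the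
non-neighbours of any vertex. Consequently every non-neighbour of a vertex of `B` lies in `B`,
which makes `A` complete to `B`; and the second vertex `p₂` of an induced path `p₁p₂p₃p₄` is
never in `B`, since every non-neighbour of `p₂` other than `p₄` is adjacent to `p₄`, so two
non-adjacent non-neighbours of `p₂` would form a `P3` through `p₄` avoiding `p₂`. Hence `B` is `P4`-free.
-/

namespace SimpleGraph

variable {G : SimpleGraph V}

/-- On `Fin 4`, `0` is the isolated vertex and `1 - 2 - 3` the path. -/
def IsP1P3Free (G : SimpleGraph V) : Prop :=
  ¬ (fromEdgeSet ({s(1, 2), s(2, 3)} : Set (Sym2 (Fin 4)))).IsIndSubgraph G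

def InIndepTriple (G : SimpleGraph V) (v : V) : Prop :=
  ∃ y z, v ≠ y ∧ v ≠ z ∧ y ≠ z ∧ ¬ G.Adj v y ∧ ¬ G.Adj v z ∧ ¬ G.Adj y z

structure IsInducedP4 (G : SimpleGraph V) (a b c d : V) : Prop where
  adj_ab : G.Adj a b
  adj_bc : G.Adj b c
  adj_cd : G.Adj c d
  not_adj_ac : ¬ G.Adj a c
  not_adj_ad : ¬ G.Adj a d
  not_adj_bd : ¬ G.Adj b d

theorem IsP1P3Free.adj_of_notAdj (hG : G.IsP1P3Free) {a b c d : V}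
    (hab : G.Adj a b) (hbc : G.Adj b c) (hac : a ≠ c)
    (hda : ¬ G.Adj d a) (hdb : ¬ G.Adj d b) (hdc : ¬ G.Adj d c) : G.Adj a c := by
  by_contra hnac
  have hda' : d ≠ a := by rintro rfl; exact hdb hab
  have hdb' : d ≠ b := by rintro rfl; exact hda hab.symm
  have hdc' : d ≠ c := by rintro rfl; exact hdb hbc.symm
  refine hG ⟨⟨![d, a, b, c], ?_⟩, ?_⟩
  · intro i j hij
    fin_cases i <;> fin_cases j <;>
      simp_all [hab.ne, hbc.ne, hab.ne.symm, hbc.ne.symm, hac.symm, hda'.symm, hdb'.symm,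
        hdc'.symm]
  · intro i j
    change G.Adj (![d, a, b, c] i) (![d, a, b, c] j) ↔ _
    fin_cases i <;> fin_cases j <;>
      simp [hab, hbc, hab.symm, hbc.symm, hnac, mt G.adj_symm hnac, hda, hdb, hdc,
        mt G.adj_symm hda, mt G.adj_symm hdb, mt G.adj_symm hdc]

theorem IsP1P3Free.inIndepTriple_of_notAdj (hG : G.IsP1P3Free) {v w : V}
    (hv : G.InIndepTriple v) (hvw : v ≠ w) (hnvw : ¬ G.Adj v w) : G.InIndepTriple w := by
  obtain ⟨y, z, hvy, hvz, hyz, hnvy, hnvz, hnyz⟩ := hv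
  have hnwv : ¬ G.Adj w v := fun h => hnvw h.symm
  by_cases hwy : w = y
  · subst hwy
    exact ⟨v, z, hvw.symm, hyz, hvz, hnwv, hnyz, hnvz⟩
  by_cases hwz : w = z
  · subst hwz
    exact ⟨v, y, hvw.symm, hyz.symm, hvy, hnwv, fun h => hnyz h.symm, hnvy⟩
  by_cases hnwy : G.Adj w y
  · by_cases hnwz : G.Adj w z
    · exact absurd (hG.adj_of_notAdj hnwy.symm hnwz hyz hnvy hnvw hnvz) hnyz
    · exact ⟨v, z, hvw.symm, hwz, hvz, hnwv, hnwz, hnvz⟩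
  · exact ⟨v, y, hvw.symm, hwy, hvy, hnwv, hnwy, hnvy⟩

theorem IsP1P3Free.eq_or_adj_of_isInducedP4 (hG : G.IsP1P3Free) {p₁ p₂ p₃ p₄ x : V}
    (hP : G.IsInducedP4 p₁ p₂ p₃ p₄) (hx : p₂ ≠ x) (hnx : ¬ G.Adj p₂ x) :
    x = p₄ ∨ G.Adj p₄ x := by
  refine or_iff_not_imp_left.2 fun hx₄ => ?_
  by_contra hn₄x
  have hnx₄ : ¬ G.Adj x p₄ := fun h => hn₄x h.symm
  have hn₄₁ : ¬ G.Adj p₄ p₁ := fun h => hP.not_adj_ad h.symm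
  have hn₄₂ : ¬ G.Adj p₄ p₂ := fun h => hP.not_adj_bd h.symm
  by_cases h₁x : G.Adj p₁ x
  · exact hnx (hG.adj_of_notAdj h₁x.symm hP.adj_ab hx.symm hn₄x hn₄₁ hn₄₂).symm
  by_cases h₃x : G.Adj p₃ x
  · exact hnx₄ (hG.adj_of_notAdj h₃x.symm hP.adj_cd hx₄ h₁x hP.not_adj_ac
      hP.not_adj_ad)
  · have h₁₃ : p₁ ≠ p₃ := by rintro rfl; exact hP.not_adj_ad hP.adj_cd
    exact hP.not_adj_ac (hG.adj_of_notAdj hP.adj_ab hP.adj_bc h₁₃ (fun h => h₁x h.symm)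
      (fun h => hnx h.symm) (fun h => h₃x h.symm))

theorem IsP1P3Free.not_inIndepTriple_of_isInducedP4 (hG : G.IsP1P3Free) {p₁ p₂ p₃ p₄ : V}
    (hP : G.IsInducedP4 p₁ p₂ p₃ p₄) : ¬ G.InIndepTriple p₂ := by
  rintro ⟨u, w, hu, hw, huw, hnu, hnw, hnuw⟩
  rcases hG.eq_or_adj_of_isInducedP4 hP hu hnu with rfl | h₄u <;>
    rcases hG.eq_or_adj_of_isInducedP4 hP hw hnw with rfl | h₄w
  · exact huw rfl
  · exact hnuw h₄w
  · exact hnuw h₄u.symm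
  · exact hnuw (hG.adj_of_notAdj h₄u.symm h₄w huw hnu hP.not_adj_bd hnw)

theorem IsIndSubgraph.exists_embedding_of_induce {H : SimpleGraph W} {s : Set V}
    (h : H.IsIndSubgraph (G.induce s)) :
    ∃ f : W ↪ V, (∀ w, f w ∈ s) ∧ ∀ a b, G.Adj (f a) (f b) ↔ H.Adj a b := by
  obtain ⟨f, hf⟩ := h
  exact ⟨f.trans (Function.Embedding.subtype _), fun w => (f w).2, hf⟩

theorem inIndepTriple_of_embedding_bot {f : Fin 3 ↪ V}
    (hf : ∀ i j, G.Adj (f i) (f j) ↔ (⊥ : SimpleGraph (Fin 3)).Adj i j) :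
    G.InIndepTriple (f 0) := by
  simp only [bot_adj, iff_false] at hf
  exact ⟨f 1, f 2, by simp, by simp, by simp, hf 0 1, hf 0 2, hf 1 2⟩

theorem isInducedP4_of_embedding_pathGraph {f : Fin 4 ↪ V}
    (hf : ∀ i j, G.Adj (f i) (f j) ↔ (pathGraph 4).Adj i j) :
    G.IsInducedP4 (f 0) (f 1) (f 2) (f 3) := by
  constructor <;> simp only [hf, pathGraph_adj] <;> decide

end SimpleGraph

theorem stmt3_general {V : Type*} (G : SimpleGraph V)
    (hfree : ¬ (SimpleGraph.fromEdgeSet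
        ({s(1, 2), s(2, 3)} : Set (Sym2 (Fin 4)))).IsIndSubgraph G) :
    ∃ A B : Set V, A ∪ B = Set.univ ∧ Disjoint A B ∧
      ¬ (⊥ : SimpleGraph (Fin 3)).IsIndSubgraph (G.induce A) ∧
      ¬ (pathGraph 4).IsIndSubgraph (G.induce B) ∧
      ∀ a ∈ A, ∀ b ∈ B, G.Adj a b := by
  have hG : G.IsP1P3Free := hfree
  set B : Set V := {v | G.InIndepTriple v}
  refine ⟨Bᶜ, B, Set.compl_union_self B, disjoint_compl_left, ?_, ?_, ?_⟩
  · intro h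
    obtain ⟨f, hfA, hf⟩ := h.exists_embedding_of_induce
    exact hfA 0 (inIndepTriple_of_embedding_bot hf)
  · intro h
    obtain ⟨f, hfB, hf⟩ := h.exists_embedding_of_induce
    exact hG.not_inIndepTriple_of_isInducedP4 (isInducedP4_of_embedding_pathGraph hf) (hfB 1)
  · intro a ha b hb
    by_contra hab
    exact ha (hG.inIndepTriple_of_notAdj hb (by rintro rfl; exact ha hb) fun h => hab h.symm)

/-- The vertex set of a `(P1 ⊕ P3)`-free graph can be partitioned into a `3P1`-free
part `A` and a `P4`-free part `B` that are complete to each other. -/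
theorem stmt3 {V : Type*} [Fintype V] (G : SimpleGraph V)
    (hfree : ¬ (SimpleGraph.fromEdgeSet
        ({s(1, 2), s(2, 3)} : Set (Sym2 (Fin 4)))).IsIndSubgraph G) :
    ∃ A B : Set V, A ∪ B = Set.univ ∧ Disjoint A B ∧
      ¬ (⊥ : SimpleGraph (Fin 3)).IsIndSubgraph (G.induce A) ∧
      ¬ (pathGraph 4).IsIndSubgraph (G.induce B) ∧
      ∀ a ∈ A, ∀ b ∈ B, G.Adj a b :=
  stmt3_general G hfree
end

section
/- Let T be a tree on n vertices and let uv be an edge of T. Then the contraction T/uv is a tree on n − 1 vertices, and exactly one of the following holds: α(T/uv) = α(T) − 1 and μ(T/uv) = μ(T), or μ(T/uv) = μ(T) − 1 and α(T/uv) = α(T). -/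
/-! For a forest on `n` vertices, `α + μ = n`: every edge of a matching has an endpoint outside
a given independent set, so `α + μ ≤ n`, and peeling off a vertex of degree at most one (adding it
to the independent set, and its edge, if any, to the matching) gives `α + μ ≥ n`. Contracting an
edge of a tree yields a tree on `n - 1` vertices, so `α + μ` drops by exactly one. Since an
independent set of `T/uv` is one of `T`, and one of `T` minus `{u, v}` is one of `T/uv` with at
most one vertex lost, `α` drops by zero or one, and `μ` drops by the complementary amount. -/

open SimpleGraph

universe u
variable {V : Type*} {W : Type*}

namespace Set

variable {α : Type*} [Finite α] {P : Set α → Prop}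

theorem bddAbove_ncard_setOf : BddAbove {n | ∃ s, P s ∧ s.ncard = n} :=
  ⟨Nat.card α, by rintro n ⟨s, -, rfl⟩; exact ncard_le_card s⟩

theorem ncard_le_sSup_ncard {s : Set α} (hs : P s) :
    s.ncard ≤ sSup {n | ∃ s, P s ∧ s.ncard = n} :=
  le_csSup bddAbove_ncard_setOf ⟨s, hs, rfl⟩

theorem exists_ncard_eq_sSup_ncard (h : P ∅) :
    ∃ s, P s ∧ s.ncard = sSup {n | ∃ s, P s ∧ s.ncard = n} :=
  Nat.sSup_mem ⟨0, show ∃ s, P s ∧ s.ncard = 0 from ⟨∅, h, ncard_empty α⟩⟩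
    bddAbove_ncard_setOf

end Set

namespace SimpleGraph

variable {G : SimpleGraph V} {u v : V}

theorem isIndepSet'_empty : G.IsIndepSet' ∅ := Set.pairwise_empty _

theorem isMatchingSet_empty : G.IsMatchingSet ∅ := ⟨Set.empty_subset _, Set.pairwise_empty _⟩

theorem IsIndepSet'.ncard_le_indepNum' [Finite V] {s : Set V} (hs : G.IsIndepSet' s) :
    s.ncard ≤ G.indepNum' :=
  Set.ncard_le_sSup_ncard hs

theorem exists_isIndepSet'_ncard_eq_indepNum' [Finite V] :
    ∃ s, G.IsIndepSet' s ∧ s.ncard = G.indepNum' :=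
  Set.exists_ncard_eq_sSup_ncard isIndepSet'_empty

theorem IsMatchingSet.ncard_le_matchingNum [Finite V] {M : Set (Sym2 V)} (hM : G.IsMatchingSet M) :
    M.ncard ≤ G.matchingNum :=
  Set.ncard_le_sSup_ncard hM

theorem exists_isMatchingSet_ncard_eq_matchingNum [Finite V] :
    ∃ M, G.IsMatchingSet M ∧ M.ncard = G.matchingNum :=
  Set.exists_ncard_eq_sSup_ncard isMatchingSet_empty

theorem IsIndepSet'.insert {s : Set V} {a : V} (hs : G.IsIndepSet' s)
    (ha : ∀ b ∈ s, ¬ G.Adj a b) : G.IsIndepSet' (insert a s) :=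
  Set.Pairwise.insert hs fun b hb _ => ⟨ha b hb, fun h => ha b hb h.symm⟩

theorem IsMatchingSet.insert {M : Set (Sym2 V)} {a b : V} (hM : G.IsMatchingSet M) (hab : G.Adj a b)
    (hM_ab : ∀ e ∈ M, a ∉ e ∧ b ∉ e) : G.IsMatchingSet (insert s(a, b) M) := by
  refine ⟨Set.insert_subset hab hM.1, Set.Pairwise.insert hM.2 fun e he _ => ⟨?_, ?_⟩⟩
  · intro x hx
    rcases Sym2.mem_iff.1 hx with rfl | rfl
    exacts [(hM_ab e he).1, (hM_ab e he).2]
  · intro x hxe hx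
    rcases Sym2.mem_iff.1 hx with rfl | rfl
    exacts [(hM_ab e he).1 hxe, (hM_ab e he).2 hxe]

theorem IsIndepSet'.ncard_add_ncard_le_card [Finite V] {I : Set V} {M : Set (Sym2 V)}
    (hI : G.IsIndepSet' I) (hM : G.IsMatchingSet M) : I.ncard + M.ncard ≤ Nat.card V := by
  have hout : ∀ e : Sym2 V, ∃ x ∈ e, e ∈ M → x ∉ I := by
    intro e
    induction e with
    | h p q =>
      by_cases hq : q ∈ I
      · refine ⟨p, Sym2.mem_mk_left p q, fun he hp => ?_⟩
        have hpq : G.Adj p q := hM.1 he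
        exact hI hp hq hpq.ne hpq
      · exact ⟨q, Sym2.mem_mk_right p q, fun _ => hq⟩
  choose f hf_mem hf_out using hout
  have hM_le : M.ncard ≤ Iᶜ.ncard := by
    refine Set.ncard_le_ncard_of_injOn f (fun e he => hf_out e he) (fun e he e' he' hee' => ?_)
    by_contra hne
    exact hM.2 he he' hne _ (hf_mem e) (hee' ▸ hf_mem e')
  have := Set.ncard_add_ncard_compl I
  omega

theorem IsAcyclic.exists_neighborSet_subsingleton [Nonempty V] [Finite G.edgeSet]
    (hG : G.IsAcyclic) : ∃ a, (G.neighborSet a).Subsingleton := by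
  obtain ⟨u, v, p, hp, hmax⟩ := Walk.exists_isPath_forall_isPath_length_le_length G
  refine ⟨u, Set.subsingleton_of_forall_eq p.snd fun w hw => ?_⟩
  by_contra hne
  have hw_supp : w ∉ p.support := fun h => hne (hG.eq_snd_of_adj_start hp hw h)
  have := hmax _ _ (p.cons (G.adj_symm hw)) (hp.cons hw_supp)
  simp at this

theorem IsAcyclic.exists_mem_forall_adj_eq (hG : G.IsAcyclic) {s : Finset V} (hs : s.Nonempty) :
    ∃ a ∈ s, ∀ b ∈ s, ∀ c ∈ s, G.Adj a b → G.Adj a c → b = c := by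
  have : Nonempty s := hs.to_subtype
  obtain ⟨⟨a, ha⟩, hleaf⟩ := (hG.induce (s : Set V)).exists_neighborSet_subsingleton
  refine ⟨a, ha, fun b hb c hc hab hac => ?_⟩
  exact congrArg Subtype.val (@hleaf ⟨b, hb⟩ hab ⟨c, hc⟩ hac)

theorem IsAcyclic.exists_isIndepSet'_isMatchingSet [Finite V] (hG : G.IsAcyclic) (s : Finset V) :
    ∃ I M, G.IsIndepSet' I ∧ G.IsMatchingSet M ∧ I ⊆ s ∧ (∀ e ∈ M, ∀ x ∈ e, x ∈ s) ∧
      s.card ≤ I.ncard + M.ncard := by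
  classical
  induction s using Finset.strongInduction with
  | H s ih =>
    rcases s.eq_empty_or_nonempty with rfl | hs
    · exact ⟨∅, ∅, isIndepSet'_empty, isMatchingSet_empty, by simp, by simp, by simp⟩
    obtain ⟨a, ha, hleaf⟩ := hG.exists_mem_forall_adj_eq hs
    by_cases hb : ∃ b ∈ s, G.Adj a b
    · obtain ⟨b, hb, hab⟩ := hb
      obtain ⟨I, M, hI, hM, hIs, hMs, hcard⟩ := ih ((s.erase a).erase b)
        ((Finset.erase_subset _ _).trans_ssubset (Finset.erase_ssubset ha))
      have hsub : ∀ x ∈ (s.erase a).erase b, x ∈ s ∧ x ≠ a ∧ x ≠ b := fun x hx => by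
        obtain ⟨hxb, hxa, hxs⟩ := by simpa only [Finset.mem_erase] using hx
        exact ⟨hxs, hxa, hxb⟩
      have hIs' x (hx : x ∈ I) := hsub x (hIs hx)
      have hMs' e (he : e ∈ M) x (hx : x ∈ e) := hsub x (hMs e he x hx)
      refine ⟨insert a I, insert s(a, b) M,
        hI.insert fun x hx hax => (hIs' x hx).2.2 (hleaf x (hIs' x hx).1 b hb hax hab),
        hM.insert hab fun e he =>
          ⟨fun h => (hMs' e he a h).2.1 rfl, fun h => (hMs' e he b h).2.2 rfl⟩,
        ?_, ?_, ?_⟩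
      · exact Set.insert_subset ha fun x hx => (hIs' x hx).1
      · rintro e (rfl | he) x hx
        · rcases Sym2.mem_iff.1 hx with rfl | rfl <;> assumption
        · exact (hMs' e he x hx).1
      · rw [Set.ncard_insert_of_notMem fun h => (hIs' a h).2.1 rfl,
          Set.ncard_insert_of_notMem fun h => (hMs' _ h a (Sym2.mem_mk_left a b)).2.1 rfl]
        have := Finset.card_erase_add_one ha
        have := Finset.card_erase_add_one (Finset.mem_erase.2 ⟨(G.ne_of_adj hab).symm, hb⟩)
        omega
    · push Not at hb
      obtain ⟨I, M, hI, hM, hIs, hMs, hcard⟩ := ih (s.erase a) (Finset.erase_ssubset ha)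
      have hIs' : ∀ x ∈ I, x ∈ s ∧ x ≠ a := fun x hx => by simpa [and_comm] using hIs hx
      refine ⟨insert a I, M, hI.insert fun x hx => hb x (hIs' x hx).1, hM, ?_, ?_, ?_⟩
      · exact Set.insert_subset ha fun x hx => (hIs' x hx).1
      · exact fun e he x hx => Finset.mem_of_mem_erase (hMs e he x hx)
      · rw [Set.ncard_insert_of_notMem fun h => (hIs' a h).2 rfl]
        have := Finset.card_erase_add_one ha
        omega

theorem IsAcyclic.indepNum'_add_matchingNum [Fintype V] (hG : G.IsAcyclic) :
    G.indepNum' + G.matchingNum = Fintype.card V := by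
  refine le_antisymm ?_ ?_
  · obtain ⟨I, hI, hI_card⟩ := G.exists_isIndepSet'_ncard_eq_indepNum'
    obtain ⟨M, hM, hM_card⟩ := G.exists_isMatchingSet_ncard_eq_matchingNum
    rw [← hI_card, ← hM_card, ← Nat.card_eq_fintype_card]
    exact hI.ncard_add_ncard_le_card hM
  · obtain ⟨I, M, hI, hM, -, -, hcard⟩ := hG.exists_isIndepSet'_isMatchingSet Finset.univ
    exact hcard.trans (add_le_add hI.ncard_le_indepNum' hM.ncard_le_matchingNum)

section Lift

variable {H : SimpleGraph W} {g : V → W}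

theorem Reachable.map_of_forall_adj (hadj : ∀ a b, G.Adj a b → H.Reachable (g a) (g b))
    {a b : V} (h : G.Reachable a b) : H.Reachable (g a) (g b) := by
  obtain ⟨p⟩ := h
  induction p with
  | nil => rfl
  | cons hab _ ih => exact (hadj _ _ hab).trans ih

theorem Reachable.of_map (hfiber : ∀ a b, g a = g b → G.Reachable a b)
    (hlift : ∀ x y, H.Adj x y → ∃ a b, G.Adj a b ∧ g a = x ∧ g b = y)
    {a b : V} (h : H.Reachable (g a) (g b)) : G.Reachable a b := by
  suffices ∀ x y (p : H.Walk x y) a b, g a = x → g b = y → G.Reachable a b from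
    this _ _ h.some a b rfl rfl
  intro x y p
  induction p with
  | nil => exact fun a b ha hb => hfiber a b (ha.trans hb.symm)
  | cons hxz _ ih =>
    intro a b ha hb
    obtain ⟨a', b', hab', ha', hb'⟩ := hlift _ _ hxz
    exact (hfiber a a' (ha.trans ha'.symm)).trans (hab'.reachable.trans (ih b' b hb' hb))

end Lift

section ContractMap

variable [DecidableEq V] (huv : v ≠ u)

def contractMap (x : V) : {x : V // x ≠ u} :=
  if hx : x = u then ⟨v, huv⟩ else ⟨x, hx⟩

@[simp]
theorem contractMap_self : contractMap huv u = ⟨v, huv⟩ := dif_pos rfl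

@[simp]
theorem contractMap_val (x : {x : V // x ≠ u}) : contractMap huv x.1 = x := dif_neg x.2

theorem contractMap_of_ne {x : V} (hx : x ≠ u) : contractMap huv x = ⟨x, hx⟩ := dif_neg hx

theorem contractMap_eq_contractMap {a b : V} (h : contractMap huv a = contractMap huv b) :
    a = b ∨ s(a, b) = s(u, v) := by
  by_cases ha : a = u <;> by_cases hb : b = u <;>
    simp_all [contractMap, Subtype.ext_iff, eq_comm]

theorem contractEdge_adj_iff {x y : {x : V // x ≠ u}} :
    (G.contractEdge u v).Adj x y ↔
      x ≠ y ∧ ∃ a b, G.Adj a b ∧ contractMap huv a = x ∧ contractMap huv b = y := by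
  refine ⟨fun ⟨hne, h⟩ => ⟨hne, ?_⟩, fun ⟨hne, a, b, hab, ha, hb⟩ => ⟨hne, ?_⟩⟩
  · rcases h with h | ⟨hx, h⟩ | ⟨hy, h⟩
    · exact ⟨x, y, h, contractMap_val huv x, contractMap_val huv y⟩
    · exact ⟨u, y, h, (contractMap_self huv).trans (Subtype.ext hx.symm), contractMap_val huv y⟩
    · exact ⟨x, u, h.symm, contractMap_val huv x,
        (contractMap_self huv).trans (Subtype.ext hy.symm)⟩
  · subst ha hb
    show G.Adj _ _ ∨ (_ = v ∧ G.Adj u _) ∨ (_ = v ∧ G.Adj u _)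
    by_cases ha : a = u
    · rw [ha] at hab
      rw [ha, contractMap_self, contractMap_of_ne huv hab.ne']
      exact Or.inr (Or.inl ⟨rfl, hab⟩)
    by_cases hb : b = u
    · rw [hb] at hab
      rw [hb, contractMap_self, contractMap_of_ne huv ha]
      exact Or.inr (Or.inr ⟨rfl, hab.symm⟩)
    rw [contractMap_of_ne huv ha, contractMap_of_ne huv hb]
    exact Or.inl hab

end ContractMap

theorem Connected.contractEdge (hG : G.Connected) (huv : v ≠ u) :
    (G.contractEdge u v).Connected := by
  classical
  have hadj : ∀ a b, G.Adj a b →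
      (G.contractEdge u v).Reachable (contractMap huv a) (contractMap huv b) := fun a b hab => by
    by_cases h : contractMap huv a = contractMap huv b
    · rw [h]
    · exact ((contractEdge_adj_iff huv).2 ⟨h, a, b, hab, rfl, rfl⟩).reachable
  refine (connected_iff _).2 ⟨fun x y => ?_, ⟨⟨v, huv⟩⟩⟩
  simpa using (hG.preconnected x.1 y.1).map_of_forall_adj hadj

/-- An edge `xy` of the contraction comes from an edge `ab` of `G`; a path from `x` to `y`
avoiding `xy` lifts to a path from `a` to `b` avoiding `ab`, crossing `uv` where it passes
through the merged vertex, so `ab` would not be a bridge. -/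
theorem IsAcyclic.contractEdge (hG : G.IsAcyclic) (huv : G.Adj u v) :
    (G.contractEdge u v).IsAcyclic := by
  classical
  set g := contractMap huv.ne'
  rw [isAcyclic_iff_forall_adj_isBridge]
  intro x y hxy
  obtain ⟨hne, a, b, hab, rfl, rfl⟩ := (contractEdge_adj_iff huv.ne').1 hxy
  have hmap {a' b' : V} (h : s(a', b') = s(a, b)) : s(g a', g b') = s(g a, g b) := by
    simpa using congrArg (Sym2.map g) h
  intro hreach
  refine isAcyclic_iff_forall_adj_isBridge.1 hG hab (hreach.of_map (g := g) ?_ ?_)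
  · intro a' b' hg
    rcases contractMap_eq_contractMap huv.ne' hg with rfl | hu
    · rfl
    refine Adj.reachable (deleteEdges_adj.2 ⟨G.mem_edgeSet.1 (hu ▸ huv), fun h => hne ?_⟩)
    exact Sym2.mk_isDiag_iff.1 (hmap h ▸ Sym2.mk_isDiag_iff.2 hg)
  · intro x' y' h'
    obtain ⟨hadj, hne'⟩ := deleteEdges_adj.1 h'
    obtain ⟨-, a', b', hab', rfl, rfl⟩ := (contractEdge_adj_iff huv.ne').1 hadj
    exact ⟨a', b', deleteEdges_adj.2 ⟨hab', fun h => hne' (hmap h)⟩, rfl, rfl⟩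

theorem IsTree.contractEdge (hG : G.IsTree) (huv : G.Adj u v) : (G.contractEdge u v).IsTree :=
  ⟨hG.connected.contractEdge huv.ne', hG.isAcyclic.contractEdge huv⟩

theorem indepNum'_le_of_injective [Finite V] {H : SimpleGraph W} {f : W → V}
    (hf : Function.Injective f) (hadj : ∀ a b, G.Adj (f a) (f b) → H.Adj a b) :
    H.indepNum' ≤ G.indepNum' := by
  have : Finite W := Finite.of_injective f hf
  obtain ⟨s, hs, hs_card⟩ := H.exists_isIndepSet'_ncard_eq_indepNum'
  have hfs : G.IsIndepSet' (f '' s) := by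
    rintro _ ⟨a, ha, rfl⟩ _ ⟨b, hb, rfl⟩ hne hab
    exact hs ha hb (fun h => hne (congrArg f h)) (hadj a b hab)
  rw [← hs_card, ← Set.ncard_image_of_injective s hf]
  exact hfs.ncard_le_indepNum'

theorem indepNum'_contractEdge_le [Finite V] : (G.contractEdge u v).indepNum' ≤ G.indepNum' :=
  indepNum'_le_of_injective Subtype.val_injective fun _ _ h =>
    ⟨fun hxy => h.ne (congrArg Subtype.val hxy), Or.inl h⟩

theorem indepNum'_le_contractEdge_add_one [Finite V] (huv : G.Adj u v) :
    G.indepNum' ≤ (G.contractEdge u v).indepNum' + 1 := by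
  obtain ⟨S, hS, hS_card⟩ := G.exists_isIndepSet'_ncard_eq_indepNum'
  set S' : Set {x : V // x ≠ u} := Subtype.val ⁻¹' (S \ {v})
  have hS' : (G.contractEdge u v).IsIndepSet' S' := by
    rintro x ⟨hx, hxv⟩ y ⟨hy, hyv⟩ hne ⟨-, h | ⟨h, -⟩ | ⟨h, -⟩⟩
    exacts [hS hx hy (Subtype.val_injective.ne hne) h, hxv h, hyv h]
  have hS'_image : Subtype.val '' S' = S \ {u, v} := by
    ext x
    simp only [S', Set.mem_image, Set.mem_preimage, Set.mem_sdiff, Set.mem_insert_iff,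
      Set.mem_singleton_iff, Subtype.exists, exists_and_right, exists_eq_right, not_or]
    tauto
  have hS_uv : (S ∩ {u, v}).ncard ≤ 1 := by
    refine (Set.ncard_le_one).2 ?_
    rintro a ⟨ha, rfl | rfl⟩ b ⟨hb, rfl | rfl⟩
    exacts [rfl, (hS ha hb huv.ne huv).elim, (hS hb ha huv.ne huv).elim, rfl]
  have := Set.ncard_inter_add_ncard_sdiff_eq_ncard S {u, v}
  rw [← hS'_image, Set.ncard_image_of_injective S' Subtype.val_injective] at this
  have := hS'.ncard_le_indepNum'
  omega

end SimpleGraph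

/-- Contracting an edge of a tree on `n` vertices gives a tree on `n - 1`
vertices, and exactly one of the following holds: the independence number drops by one and the
matching number stays the same, or the matching number drops by one and the independence number
stays the same. -/
theorem stmt13 {V : Type*} [Fintype V] [DecidableEq V] (T : SimpleGraph V) (hT : T.IsTree) (n : ℕ)
    (hn : Fintype.card V = n) (u v : V) (huv : T.Adj u v) :
    (T.contractEdge u v).IsTree ∧ Fintype.card {x : V // x ≠ u} = n - 1 ∧
      Xor'
        ((T.contractEdge u v).indepNum' = T.indepNum' - 1 ∧
          (T.contractEdge u v).matchingNum = T.matchingNum)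
        ((T.contractEdge u v).matchingNum = T.matchingNum - 1 ∧
          (T.contractEdge u v).indepNum' = T.indepNum') := by
  have hC := hT.contractEdge huv
  have hcard : Fintype.card {x : V // x ≠ u} = n - 1 := by
    simp [Fintype.card_subtype_compl, hn]
  have hT_sum := hT.isAcyclic.indepNum'_add_matchingNum
  have hC_sum := hC.isAcyclic.indepNum'_add_matchingNum
  have h_le := T.indepNum'_contractEdge_le (u := u) (v := v)
  have h_ge := T.indepNum'_le_contractEdge_add_one huv
  have hn_pos : 0 < n := hn ▸ Fintype.card_pos_iff.2 ⟨u⟩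
  refine ⟨hC, hcard, ?_⟩
  rw [hcard] at hC_sum
  rw [hn] at hT_sum
  unfold Xor' Xor
  omega
end
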